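/- For the fixed reduced word i = (1, 2,1, 3,2,1, ..., n-1,...,1) of the longest element of S_n, each column set K_i^{(r)} = s_{i₁}s_{i₂}···s_{i_r}({1,2,...,i_r}) is an interval of consecutive integers in {1,...,n}. -/

import Mathlib

/-- The simple transposition `s_j = (j, j+1)` acting on `ℕ ⊇ {1,…,n}`;
`s₀` is the identity. -/
def sRefl (j : ℕ) : Equiv.Perm ℕ := if j = 0 then 1 else Equiv.swap j (j + 1)

/-- The word `i = (1, 2,1, 3,2,1, …, n-1,…,1)`, listing the letters of
`(s₁)(s₂s₁)⋯(s_{n-1}⋯s₁)`. -/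
def theWord (n : ℕ) : List ℕ :=
  (List.range (n - 1)).flatMap (fun k => ((List.range (k + 1)).reverse.map (· + 1)))

/-- The column set `K^{(r)} = s_{i₁}s_{i₂}⋯s_{i_r}({1,…,i_r})` attached to the
`r`-th letter (0-indexed `r`) of a word `l`. -/
def colSet (l : List ℕ) (r : ℕ) : Finset ℕ :=
  (Finset.Icc 1 (l.getD r 0)).image (((l.take (r + 1)).map sRefl).prod : Equiv.Perm ℕ)

/-!
The word is the concatenation of the blocks `k+1, k, …, 1` for `k < n - 1`, so position `r`
is the `t`-th letter `k+1-t` of block `k` for some `t ≤ k`, and the prefix ending there gives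
`(s₁)(s₂s₁)⋯(s_k⋯s₁) · s_{k+1}s_k⋯s_{k+1-t}`. The first factor is the longest element of
`S_{k+1}`, the reversal `x ↦ k+2-x` of `{1,…,k+1}` (`reverseOn`); the second is the cycle
`k+1-t ↦ k+2 ↦ k+1 ↦ ⋯ ↦ k+2-t ↦ k+1-t` (`cycleOn`). The cycle sends `{1,…,k+1-t}` to
`{1,…,k-t} ∪ {k+2}`, which the reversal turns into the interval `{t+2,…,k+2}`.
-/

def wordPerm (l : List ℕ) : Equiv.Perm ℕ := (l.map sRefl).prod

lemma wordPerm_append (u v : List ℕ) : wordPerm (u ++ v) = wordPerm u * wordPerm v := by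
  simp [wordPerm]

lemma colSet_eq (l : List ℕ) (r : ℕ) :
    colSet l r = (Finset.Icc 1 (l.getD r 0)).image (wordPerm (l.take (r + 1))) := rfl

lemma colSet_of_prefix {l₁ l₂ : List ℕ} (h : l₁ <+: l₂) {r : ℕ} (hr : r < l₁.length) :
    colSet l₂ r = colSet l₁ r := by
  obtain ⟨u, rfl⟩ := h
  rw [colSet_eq, colSet_eq, List.getD_append _ _ _ _ hr, List.take_append,
    Nat.sub_eq_zero_of_le hr, List.take_zero, List.append_nil]

lemma colSet_append_right (u v : List ℕ) (t : ℕ) :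
    colSet (u ++ v) (u.length + t) = (colSet v t).image (wordPerm u) := by
  rw [colSet_eq, colSet_eq, Finset.image_image, List.getD_append_right _ _ _ _ (by omega),
    List.take_append, List.take_of_length_le (by omega), wordPerm_append, Equiv.Perm.coe_mul,
    Nat.add_sub_cancel_left, show u.length + t + 1 - u.length = t + 1 by omega]

def reverseOn (m x : ℕ) : ℕ := if 1 ≤ x ∧ x ≤ m then m + 1 - x else x

def cycleOn (a b x : ℕ) : ℕ := if x = a then b else if a < x ∧ x ≤ b then x - 1 else x

lemma coe_wordPerm_range'_reverse {a : ℕ} (ha : 1 ≤ a) (m : ℕ) :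
    ⇑(wordPerm (List.range' a m).reverse) = cycleOn a (a + m) := by
  induction m with
  | zero =>
    funext x
    simp only [List.range'_zero, List.reverse_nil, wordPerm, List.map_nil, List.prod_nil,
      Equiv.Perm.coe_one, id, cycleOn]
    split_ifs <;> omega
  | succ m ih =>
    funext x
    rw [List.range'_concat, List.reverse_append, wordPerm_append, Equiv.Perm.mul_apply, ih]
    simp only [wordPerm, List.reverse_cons, List.reverse_nil, List.nil_append, List.map_cons,
      List.map_nil, List.prod_cons, List.prod_nil, mul_one, sRefl, if_neg (by omega : a + 1 * m ≠ 0),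
      Equiv.swap_apply_def, cycleOn]
    split_ifs <;> omega

def descBlock (k : ℕ) : List ℕ := (List.range' 1 (k + 1)).reverse

def stairWord (K : ℕ) : List ℕ := (List.range K).flatMap descBlock

lemma theWord_eq_stairWord (n : ℕ) : theWord n = stairWord (n - 1) := by
  rw [theWord, stairWord]
  congr
  funext k
  rw [descBlock, List.range'_eq_map_range, List.map_reverse]
  simp only [Nat.add_comm 1]

lemma descBlock_length (k : ℕ) : (descBlock k).length = k + 1 := by
  simp [descBlock]

lemma descBlock_take {k t : ℕ} (ht : t ≤ k) :
    (descBlock k).take (t + 1) = (List.range' (k + 1 - t) (t + 1)).reverse := by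
  rw [descBlock, List.take_reverse, List.drop_range', List.length_range']
  congr 2 <;> omega

lemma descBlock_getD {k t : ℕ} (ht : t ≤ k) : (descBlock k).getD t 0 = k + 1 - t := by
  rw [List.getD_eq_getElem _ _ (by rw [descBlock_length]; omega)]
  simp only [descBlock, List.getElem_reverse, List.getElem_range', List.length_range']
  omega

lemma stairWord_succ (K : ℕ) : stairWord (K + 1) = stairWord K ++ descBlock K := by
  simp [stairWord, List.range_succ]

lemma stairWord_prefix {k K : ℕ} (h : k ≤ K) : stairWord k <+: stairWord K := by
  induction K, h using Nat.le_induction with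
  | base => exact List.prefix_refl _
  | succ K _ ih => exact ih.trans (stairWord_succ K ▸ List.prefix_append _ _)

lemma exists_stairWord_index {K r : ℕ} (hr : r < (stairWord K).length) :
    ∃ k < K, ∃ t ≤ k, r = (stairWord k).length + t := by
  induction K with
  | zero => simp [stairWord] at hr
  | succ K ih =>
    rw [stairWord_succ, List.length_append, descBlock_length] at hr
    by_cases h : r < (stairWord K).length
    · obtain ⟨k, hk, t, ht, rfl⟩ := ih h
      exact ⟨k, by omega, t, ht, rfl⟩
    · exact ⟨K, by omega, r - (stairWord K).length, by omega, by omega⟩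

lemma coe_wordPerm_stairWord (k : ℕ) : ⇑(wordPerm (stairWord k)) = reverseOn (k + 1) := by
  induction k with
  | zero =>
    funext x
    simp only [stairWord, List.range_zero, List.flatMap_nil, wordPerm, List.map_nil,
      List.prod_nil, Equiv.Perm.coe_one, id, reverseOn]
    split_ifs <;> omega
  | succ k ih =>
    funext x
    rw [stairWord_succ, wordPerm_append, Equiv.Perm.mul_apply, ih, descBlock,
      coe_wordPerm_range'_reverse le_rfl]
    simp only [reverseOn, cycleOn]
    split_ifs <;> omega

lemma image_reverseOn_cycleOn {k t : ℕ} (ht : t ≤ k) :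
    (Finset.Icc 1 (k + 1 - t)).image (reverseOn (k + 1) ∘ cycleOn (k + 1 - t) (k + 2)) =
      Finset.Icc (t + 2) (k + 2) := by
  ext y
  simp only [Finset.mem_image, Finset.mem_Icc, Function.comp_apply]
  constructor
  · rintro ⟨x, hx, rfl⟩
    simp only [reverseOn, cycleOn]
    split_ifs <;> omega
  · intro hy
    refine ⟨if y = k + 2 then k + 1 - t else k + 2 - y, by split_ifs <;> omega, ?_⟩
    simp only [reverseOn, cycleOn]
    split_ifs <;> omega

lemma colSet_stairWord {K k t : ℕ} (hk : k < K) (ht : t ≤ k) :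
    colSet (stairWord K) ((stairWord k).length + t) = Finset.Icc (t + 2) (k + 2) := by
  have hpre : stairWord k ++ descBlock k <+: stairWord K := by
    rw [← stairWord_succ]; exact stairWord_prefix hk
  rw [colSet_of_prefix hpre (by simp [descBlock_length]; omega), colSet_append_right, colSet_eq,
    descBlock_getD ht, descBlock_take ht, Finset.image_image, coe_wordPerm_stairWord,
    coe_wordPerm_range'_reverse (by omega), show k + 1 - t + (t + 1) = k + 2 by omega,
    image_reverseOn_cycleOn ht]

/-- For the fixed reduced word `i = (1, 2,1, …, n-1,…,1)` of the longest element
of `S_n`, each column set `K_i^{(r)}` is an interval of consecutive integers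
inside `{1,…,n}`. -/
theorem colSet_is_interval (n : ℕ) (r : ℕ) (hr : r < (theWord n).length) :
    colSet (theWord n) r ⊆ Finset.Icc 1 n ∧
    ∃ a : ℕ, colSet (theWord n) r =
      Finset.Ico a (a + (colSet (theWord n) r).card) := by
  rw [theWord_eq_stairWord] at hr ⊢
  obtain ⟨k, hk, t, ht, rfl⟩ := exists_stairWord_index hr
  rw [colSet_stairWord hk ht, Nat.card_Icc]
  refine ⟨Finset.Icc_subset_Icc (by omega) (by omega), t + 2, ?_⟩
  rw [← Finset.Ico_add_one_right_eq_Icc]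
  congr 1
  omega
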